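/- Let B be the 3×3 skew-symmetric matrix with b₁₂ = 1, b₂₃ = 1, b₃₁ = 1 (the cyclically oriented triangle, of cluster type A₃). Then the set of positive c-vectors of the cluster algebra with principal coefficients A_•(B) is exactly {(1,0,0), (0,1,0), (0,0,1), (1,1,0), (1,0,1), (0,1,1)}. -/
import Mathlib


/-- Matrix mutation in direction `k`. -/
def mutateB {n : ℕ} (B : Matrix (Fin n) (Fin n) ℤ) (k : Fin n) : Matrix (Fin n) (Fin n) ℤ :=
  Matrix.of fun i j =>
    if i = k ∨ j = k then -B i j
    else B i j + B i k * max (B k j) 0 + max (-B i k) 0 * B k j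

/-- Mutation of a pair (exchange matrix, C-matrix) in direction `k`, by the
Fomin–Zelevinsky rule for extended exchange matrices. -/
def mutatePair {n : ℕ} (p : Matrix (Fin n) (Fin n) ℤ × Matrix (Fin n) (Fin n) ℤ)
    (k : Fin n) : Matrix (Fin n) (Fin n) ℤ × Matrix (Fin n) (Fin n) ℤ :=
  (mutateB p.1 k,
    Matrix.of fun i j =>
      if j = k then -p.2 i j
      else p.2 i j + p.2 i k * max (p.1 k j) 0 + max (-p.2 i k) 0 * p.1 k j)

/-- The set of c-vectors of the cluster algebra with principal coefficients `A_•(B)`: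
columns of the C-matrices reachable from `(B, Id)` by mutations. -/
def cVectors {n : ℕ} (B : Matrix (Fin n) (Fin n) ℤ) : Set (Fin n → ℤ) :=
  {v | ∃ (l : List (Fin n)) (j : Fin n), v = fun i => (l.foldl mutatePair (B, 1)).2 i j}

set_option maxHeartbeats 4000000 in
def stateList : List (Matrix (Fin 3) (Fin 3) ℤ × Matrix (Fin 3) (Fin 3) ℤ) := [
  (!![0, -1, -1; 1, 0, 0; 1, 0, 0], !![-1, 0, 1; 0, 0, 1; 0, -1, 0]),
  (!![0, -1, -1; 1, 0, 0; 1, 0, 0], !![-1, 1, 0; 0, 1, 0; 0, 0, -1]),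
  (!![0, -1, -1; 1, 0, 0; 1, 0, 0], !![0, -1, 0; -1, 0, 1; 0, 0, 1]),
  (!![0, -1, -1; 1, 0, 0; 1, 0, 0], !![0, 0, -1; -1, 1, 0; 0, 1, 0]),
  (!![0, -1, -1; 1, 0, 0; 1, 0, 0], !![0, 0, 1; 0, -1, 0; -1, 0, 1]),
  (!![0, -1, -1; 1, 0, 0; 1, 0, 0], !![0, 1, 0; 0, 0, -1; -1, 1, 0]),
  (!![0, -1, 0; 1, 0, -1; 0, 1, 0], !![-1, 0, 0; -1, 1, 0; 0, 0, -1]),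
  (!![0, -1, 0; 1, 0, -1; 0, 1, 0], !![-1, 1, 0; 0, 0, -1; -1, 0, 0]),
  (!![0, -1, 0; 1, 0, -1; 0, 1, 0], !![0, -1, 1; 0, 0, 1; 1, 0, 0]),
  (!![0, -1, 0; 1, 0, -1; 0, 1, 0], !![0, 0, -1; -1, 0, 0; -1, 1, 0]),
  (!![0, -1, 0; 1, 0, -1; 0, 1, 0], !![0, 0, 1; 1, 0, 0; 0, -1, 1]),
  (!![0, -1, 0; 1, 0, -1; 0, 1, 0], !![1, 0, 0; 0, -1, 1; 0, 0, 1]),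
  (!![0, -1, 0; 1, 0, 1; 0, -1, 0], !![-1, 0, 0; -1, 1, 0; 0, 0, 1]),
  (!![0, -1, 0; 1, 0, 1; 0, -1, 0], !![-1, 1, 0; 0, 0, 1; -1, 0, 0]),
  (!![0, -1, 0; 1, 0, 1; 0, -1, 0], !![0, 0, -1; 0, 1, -1; 1, 0, 0]),
  (!![0, -1, 0; 1, 0, 1; 0, -1, 0], !![0, 0, 1; -1, 0, 0; -1, 1, 0]),
  (!![0, -1, 0; 1, 0, 1; 0, -1, 0], !![0, 1, -1; 1, 0, 0; 0, 0, -1]),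
  (!![0, -1, 0; 1, 0, 1; 0, -1, 0], !![1, 0, 0; 0, 0, -1; 0, 1, -1]),
  (!![0, -1, 1; 1, 0, -1; -1, 1, 0], !![-1, 0, 0; 0, 0, -1; 0, -1, 0]),
  (!![0, -1, 1; 1, 0, -1; -1, 1, 0], !![0, -1, 0; -1, 0, 0; 0, 0, -1]),
  (!![0, -1, 1; 1, 0, -1; -1, 1, 0], !![0, 0, -1; 0, -1, 0; -1, 0, 0]),
  (!![0, -1, 1; 1, 0, -1; -1, 1, 0], !![0, 0, 1; 0, 1, 0; 1, 0, 0]),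
  (!![0, -1, 1; 1, 0, -1; -1, 1, 0], !![0, 1, 0; 1, 0, 0; 0, 0, 1]),
  (!![0, -1, 1; 1, 0, -1; -1, 1, 0], !![1, 0, 0; 0, 0, 1; 0, 1, 0]),
  (!![0, -1, 1; 1, 0, 0; -1, 0, 0], !![-1, 1, 0; 0, 1, 0; 0, 0, 1]),
  (!![0, -1, 1; 1, 0, 0; -1, 0, 0], !![0, -1, 0; 0, 0, -1; 1, 0, -1]),
  (!![0, -1, 1; 1, 0, 0; -1, 0, 0], !![0, 0, -1; 1, 0, -1; 0, -1, 0]),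
  (!![0, -1, 1; 1, 0, 0; -1, 0, 0], !![0, 0, 1; -1, 1, 0; 0, 1, 0]),
  (!![0, -1, 1; 1, 0, 0; -1, 0, 0], !![0, 1, 0; 0, 0, 1; -1, 1, 0]),
  (!![0, -1, 1; 1, 0, 0; -1, 0, 0], !![1, 0, -1; 0, -1, 0; 0, 0, -1]),
  (!![0, 0, -1; 0, 0, -1; 1, 1, 0], !![-1, 0, 0; -1, 0, 1; 0, 1, 0]),
  (!![0, 0, -1; 0, 0, -1; 1, 1, 0], !![-1, 0, 1; 0, 1, 0; -1, 0, 0]),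
  (!![0, 0, -1; 0, 0, -1; 1, 1, 0], !![0, -1, 0; 0, -1, 1; 1, 0, 0]),
  (!![0, 0, -1; 0, 0, -1; 1, 1, 0], !![0, -1, 1; 1, 0, 0; 0, -1, 0]),
  (!![0, 0, -1; 0, 0, -1; 1, 1, 0], !![0, 1, 0; -1, 0, 0; -1, 0, 1]),
  (!![0, 0, -1; 0, 0, -1; 1, 1, 0], !![1, 0, 0; 0, -1, 0; 0, -1, 1]),
  (!![0, 0, -1; 0, 0, 1; 1, -1, 0], !![-1, 0, 0; -1, 0, 1; 0, -1, 0]),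
  (!![0, 0, -1; 0, 0, 1; 1, -1, 0], !![-1, 0, 1; 0, -1, 0; -1, 0, 0]),
  (!![0, 0, -1; 0, 0, 1; 1, -1, 0], !![0, -1, 0; -1, 0, 0; -1, 0, 1]),
  (!![0, 0, -1; 0, 0, 1; 1, -1, 0], !![0, 1, -1; 0, 1, 0; 1, 0, 0]),
  (!![0, 0, -1; 0, 0, 1; 1, -1, 0], !![0, 1, 0; 1, 0, 0; 0, 1, -1]),
  (!![0, 0, -1; 0, 0, 1; 1, -1, 0], !![1, 0, 0; 0, 1, -1; 0, 1, 0]),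
  (!![0, 0, 1; 0, 0, -1; -1, 1, 0], !![-1, 0, 0; 0, -1, 0; 0, -1, 1]),
  (!![0, 0, 1; 0, 0, -1; -1, 1, 0], !![0, -1, 0; 0, -1, 1; -1, 0, 0]),
  (!![0, 0, 1; 0, 0, -1; -1, 1, 0], !![0, -1, 1; -1, 0, 0; 0, -1, 0]),
  (!![0, 0, 1; 0, 0, -1; -1, 1, 0], !![0, 1, 0; 1, 0, -1; 1, 0, 0]),
  (!![0, 0, 1; 0, 0, -1; -1, 1, 0], !![1, 0, -1; 1, 0, 0; 0, 1, 0]),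
  (!![0, 0, 1; 0, 0, -1; -1, 1, 0], !![1, 0, 0; 0, 1, 0; 1, 0, -1]),
  (!![0, 0, 1; 0, 0, 1; -1, -1, 0], !![-1, 0, 0; 0, 1, -1; 0, 1, 0]),
  (!![0, 0, 1; 0, 0, 1; -1, -1, 0], !![0, -1, 0; 1, 0, -1; 1, 0, 0]),
  (!![0, 0, 1; 0, 0, 1; -1, -1, 0], !![0, 1, -1; 0, 1, 0; -1, 0, 0]),
  (!![0, 0, 1; 0, 0, 1; -1, -1, 0], !![0, 1, 0; -1, 0, 0; 0, 1, -1]),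
  (!![0, 0, 1; 0, 0, 1; -1, -1, 0], !![1, 0, -1; 1, 0, 0; 0, -1, 0]),
  (!![0, 0, 1; 0, 0, 1; -1, -1, 0], !![1, 0, 0; 0, -1, 0; 1, 0, -1]),
  (!![0, 1, -1; -1, 0, 0; 1, 0, 0], !![-1, 0, 1; 0, 0, 1; 0, 1, 0]),
  (!![0, 1, -1; -1, 0, 0; 1, 0, 0], !![0, -1, 0; 1, -1, 0; 0, 0, -1]),
  (!![0, 1, -1; -1, 0, 0; 1, 0, 0], !![0, 0, -1; 0, -1, 0; 1, -1, 0]),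
  (!![0, 1, -1; -1, 0, 0; 1, 0, 0], !![0, 0, 1; 0, 1, 0; -1, 0, 1]),
  (!![0, 1, -1; -1, 0, 0; 1, 0, 0], !![0, 1, 0; -1, 0, 1; 0, 0, 1]),
  (!![0, 1, -1; -1, 0, 0; 1, 0, 0], !![1, -1, 0; 0, 0, -1; 0, -1, 0]),
  (!![0, 1, -1; -1, 0, 1; 1, -1, 0], !![-1, 0, 0; 0, -1, 0; 0, 0, -1]),
  (!![0, 1, -1; -1, 0, 1; 1, -1, 0], !![0, -1, 0; 0, 0, -1; -1, 0, 0]),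
  (!![0, 1, -1; -1, 0, 1; 1, -1, 0], !![0, 0, -1; -1, 0, 0; 0, -1, 0]),
  (!![0, 1, -1; -1, 0, 1; 1, -1, 0], !![0, 0, 1; 1, 0, 0; 0, 1, 0]),
  (!![0, 1, -1; -1, 0, 1; 1, -1, 0], !![0, 1, 0; 0, 0, 1; 1, 0, 0]),
  (!![0, 1, -1; -1, 0, 1; 1, -1, 0], !![1, 0, 0; 0, 1, 0; 0, 0, 1]),
  (!![0, 1, 0; -1, 0, -1; 0, 1, 0], !![-1, 0, 0; 0, -1, 1; 0, 0, 1]),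
  (!![0, 1, 0; -1, 0, -1; 0, 1, 0], !![0, -1, 1; 0, 0, 1; -1, 0, 0]),
  (!![0, 1, 0; -1, 0, -1; 0, 1, 0], !![0, 0, -1; 1, -1, 0; 1, 0, 0]),
  (!![0, 1, 0; -1, 0, -1; 0, 1, 0], !![0, 0, 1; -1, 0, 0; 0, -1, 1]),
  (!![0, 1, 0; -1, 0, -1; 0, 1, 0], !![1, -1, 0; 1, 0, 0; 0, 0, -1]),
  (!![0, 1, 0; -1, 0, -1; 0, 1, 0], !![1, 0, 0; 0, 0, -1; 1, -1, 0]),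
  (!![0, 1, 0; -1, 0, 1; 0, -1, 0], !![-1, 0, 0; 0, 0, -1; 0, 1, -1]),
  (!![0, 1, 0; -1, 0, 1; 0, -1, 0], !![0, 0, -1; 0, 1, -1; -1, 0, 0]),
  (!![0, 1, 0; -1, 0, 1; 0, -1, 0], !![0, 0, 1; 1, -1, 0; 1, 0, 0]),
  (!![0, 1, 0; -1, 0, 1; 0, -1, 0], !![0, 1, -1; -1, 0, 0; 0, 0, -1]),
  (!![0, 1, 0; -1, 0, 1; 0, -1, 0], !![1, -1, 0; 1, 0, 0; 0, 0, 1]),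
  (!![0, 1, 0; -1, 0, 1; 0, -1, 0], !![1, 0, 0; 0, 0, 1; 1, -1, 0]),
  (!![0, 1, 1; -1, 0, 0; -1, 0, 0], !![0, -1, 0; 1, -1, 0; 0, 0, 1]),
  (!![0, 1, 1; -1, 0, 0; -1, 0, 0], !![0, 0, -1; 1, 0, -1; 0, 1, 0]),
  (!![0, 1, 1; -1, 0, 0; -1, 0, 0], !![0, 0, 1; 0, -1, 0; 1, -1, 0]),
  (!![0, 1, 1; -1, 0, 0; -1, 0, 0], !![0, 1, 0; 0, 0, -1; 1, 0, -1]),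
  (!![0, 1, 1; -1, 0, 0; -1, 0, 0], !![1, -1, 0; 0, 0, 1; 0, -1, 0]),
  (!![0, 1, 1; -1, 0, 0; -1, 0, 0], !![1, 0, -1; 0, 1, 0; 0, 0, -1])]

set_option maxHeartbeats 4000000 in
set_option maxRecDepth 10000 in
lemma closed : ∀ p ∈ stateList, ∀ k : Fin 3, mutatePair p k ∈ stateList := by decide

lemma start_mem : ((!![0, 1, -1; -1, 0, 1; 1, -1, 0] : Matrix (Fin 3) (Fin 3) ℤ),
    (1 : Matrix (Fin 3) (Fin 3) ℤ)) ∈ stateList := by decide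

lemma foldl_mem (l : List (Fin 3)) :
    l.foldl mutatePair (!![0, 1, -1; -1, 0, 1; 1, -1, 0], 1) ∈ stateList := by
  suffices h : ∀ p ∈ stateList, l.foldl mutatePair p ∈ stateList from h _ start_mem
  induction l with
  | nil => intro p hp; exact hp
  | cons k t ih => intro p hp; exact ih _ (closed p hp k)

set_option maxHeartbeats 4000000 in
lemma cols_mem : ∀ p ∈ stateList, ∀ j : Fin 3,
    (![p.2 0 j, p.2 1 j, p.2 2 j] : Fin 3 → ℤ) ∈
      [![(-1 : ℤ),-1,0], ![-1,0,-1], ![-1,0,0], ![0,-1,-1], ![0,-1,0], ![0,0,-1],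
       ![0,0,1], ![0,1,0], ![0,1,1], ![1,0,0], ![1,0,1], ![1,1,0]] := by decide

/-- For the cyclically oriented triangle (cluster type `A₃`), the positive c-vectors
are exactly the six listed vectors. -/
theorem positive_c_vectors_A3_cycle :
    {v : Fin 3 → ℤ | v ∈ cVectors !![0, 1, -1; -1, 0, 1; 1, -1, 0] ∧
        v ≠ 0 ∧ ∀ i, 0 ≤ v i}
      = {![1,0,0], ![0,1,0], ![0,0,1], ![1,1,0], ![1,0,1], ![0,1,1]} := by
  ext v
  simp only [Set.mem_setOf_eq, Set.mem_insert_iff, Set.mem_singleton_iff]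
  constructor
  · rintro ⟨⟨l, j, rfl⟩, hne, hpos⟩
    have hmem := cols_mem _ (foldl_mem l) j
    have hv : (fun i => (l.foldl mutatePair (!![0, 1, -1; -1, 0, 1; 1, -1, 0], 1)).2 i j)
        = ![(l.foldl mutatePair (!![0, 1, -1; -1, 0, 1; 1, -1, 0], 1)).2 0 j,
            (l.foldl mutatePair (!![0, 1, -1; -1, 0, 1; 1, -1, 0], 1)).2 1 j,
            (l.foldl mutatePair (!![0, 1, -1; -1, 0, 1; 1, -1, 0], 1)).2 2 j] := by
      funext i; fin_cases i <;> rfl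
    rw [hv] at hpos ⊢
    simp only [List.mem_cons, List.not_mem_nil, or_false] at hmem
    rcases hmem with h|h|h|h|h|h|h|h|h|h|h|h <;> rw [h] at hpos ⊢ <;>
      first | tauto | (exfalso; revert hpos; decide)
  · intro h
    rcases h with rfl | rfl | rfl | rfl | rfl | rfl
    · exact ⟨⟨[0,2,0], 0, by funext i; fin_cases i <;> decide⟩, by decide, by decide⟩
    · exact ⟨⟨[2], 1, by funext i; fin_cases i <;> decide⟩, by decide, by decide⟩
    · exact ⟨⟨[1,0,2,1,2,0,1], 1, by funext i; fin_cases i <;> decide⟩, by decide, by decide⟩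
    · exact ⟨⟨[1,0,2,1,2,0,1], 0, by funext i; fin_cases i <;> decide⟩, by decide, by decide⟩
    · exact ⟨⟨[2], 0, by funext i; fin_cases i <;> decide⟩, by decide, by decide⟩
    · exact ⟨⟨[0,1,2,0,2,0,1], 0, by funext i; fin_cases i <;> decide⟩, by decide, by decide⟩
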